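/- arXiv:2203.08170 — 2 statements merged into one kernel-verified Lean document; each statement's English description precedes it below -/
import Mathlib

section
/- For every integer d ≥ 2 there exists a d-regular finite simple graph G of order n = 3d − 1 with gp(μ(G)) = n + 1 = 3d. In particular, the graph G(d) defined as follows has this property: take disjoint vertex sets V1, V2, V4 with |V1| = |V2| = d and |V4| = d − 1; add all edges between V1 and V4; make V2 a clique by adding all edges within V2; and join V1 to V2 by a perfect matching of size d. -/
open SimpleGraph

variable {V : Type*}

/-- The Mycielskian of a graph `G`: vertices are `some (Sum.inl v)` (original vertices),
`some (Sum.inr v)` (twin vertices), and `none` (the root `u*`). -/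
def Mycielskian (G : SimpleGraph V) : SimpleGraph (Option (V ⊕ V)) :=
  SimpleGraph.fromRel (fun x y =>
    (∃ u v, G.Adj u v ∧ x = some (Sum.inl u) ∧ y = some (Sum.inl v)) ∨
    (∃ u v, G.Adj u v ∧ x = some (Sum.inl u) ∧ y = some (Sum.inr v)) ∨
    (∃ u, x = some (Sum.inr u) ∧ y = none))

/-- `S` is a general position set: no shortest path between two vertices of `S`
contains a third element of `S`. -/
def IsGPSet (G : SimpleGraph V) (S : Set V) : Prop :=
  ∀ u ∈ S, ∀ v ∈ S, ∀ p : G.Walk u v, p.length = G.dist u v →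
    ∀ w ∈ S, w ∈ p.support → w = u ∨ w = v

/-- The general position number of `G`: the maximum cardinality of a general position set. -/
noncomputable def gpNumber (G : SimpleGraph V) [Fintype V] : ℕ :=
  sSup {k | ∃ S : Set V, IsGPSet G S ∧ S.ncard = k}

/-- A gp-set: a general position set of maximum cardinality. -/
def IsGpSet (G : SimpleGraph V) [Fintype V] (S : Set V) : Prop :=
  IsGPSet G S ∧ S.ncard = gpNumber G

/-- `G` is a `d`-regular graph: every vertex has degree `d`. -/
def IsRegularDeg (G : SimpleGraph V) (d : ℕ) : Prop :=
  ∀ v : V, (G.neighborSet v).ncard = d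

/-- The graph `G(d)`: vertex sets `V1 = Fin d` (left), `V2 = Fin d` (middle) and
`V4 = Fin (d-1)` (right); all edges between `V1` and `V4`, `V2` a clique, and a
perfect matching between `V1` and `V2`. -/
def Gd (d : ℕ) : SimpleGraph (Fin d ⊕ (Fin d ⊕ Fin (d - 1))) :=
  SimpleGraph.fromRel (fun x y =>
    (∃ i j, x = Sum.inl i ∧ y = Sum.inr (Sum.inr j)) ∨
    (∃ i j, x = Sum.inr (Sum.inl i) ∧ y = Sum.inr (Sum.inl j)) ∨
    (∃ i, x = Sum.inl i ∧ y = Sum.inr (Sum.inl i)))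


set_option linter.unnecessarySeqFocus false
set_option linter.unreachableTactic false
set_option linter.unusedTactic false

section Helpers

lemma ncard_option' {γ : Type*} [Finite γ] (B : Set (Option γ)) :
    B.ncard = (some ⁻¹' B).ncard + (B ∩ {none}).ncard := by
  have hdecomp : B = (some '' (some ⁻¹' B)) ∪ (B ∩ {none}) := by
    ext x
    cases x <;> simp
  have h1 : (some '' (some ⁻¹' B)).ncard = (some ⁻¹' B).ncard :=
    Set.ncard_image_of_injective _ (Option.some_injective γ)
  have hd : Disjoint (some '' (some ⁻¹' B)) (B ∩ {none}) := by
    rw [Set.disjoint_left]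
    rintro x ⟨a, _, rfl⟩ hx
    simp at hx
  conv_lhs => rw [hdecomp]
  rw [Set.ncard_union_eq hd (Set.toFinite _) (Set.toFinite _), h1]

lemma ncard_option_mem {γ : Type*} [Finite γ] {B : Set (Option γ)} (h : none ∈ B) :
    B.ncard = (some ⁻¹' B).ncard + 1 := by
  rw [ncard_option' B]
  congr 1
  rw [show B ∩ {none} = {none} from by
    ext x; simp only [Set.mem_inter_iff, Set.mem_singleton_iff, and_iff_right_iff_imp]
    rintro rfl; exact h]
  simp

lemma ncard_option_notMem {γ : Type*} [Finite γ] {B : Set (Option γ)} (h : none ∉ B) :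
    B.ncard = (some ⁻¹' B).ncard := by
  rw [ncard_option' B]
  rw [show B ∩ {none} = ∅ from by
    ext x; simp only [Set.mem_inter_iff, Set.mem_singleton_iff, Set.mem_empty_iff_false,
      iff_false, not_and]
    exact fun hxB hxn => h (hxn ▸ hxB)]
  simp

lemma ncard_sum {γ δ : Type*} [Finite γ] [Finite δ] (B : Set (γ ⊕ δ)) :
    B.ncard = (Sum.inl ⁻¹' B).ncard + (Sum.inr ⁻¹' B).ncard := by
  have hdecomp : B = (Sum.inl '' (Sum.inl ⁻¹' B)) ∪ (Sum.inr '' (Sum.inr ⁻¹' B)) := by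
    ext x
    cases x <;> simp
  have h1 : (Sum.inl '' (Sum.inl ⁻¹' B) : Set (γ ⊕ δ)).ncard = (Sum.inl ⁻¹' B).ncard :=
    Set.ncard_image_of_injective _ Sum.inl_injective
  have h2 : (Sum.inr '' (Sum.inr ⁻¹' B) : Set (γ ⊕ δ)).ncard = (Sum.inr ⁻¹' B).ncard :=
    Set.ncard_image_of_injective _ Sum.inr_injective
  have hd : Disjoint (Sum.inl '' (Sum.inl ⁻¹' B) : Set (γ ⊕ δ)) (Sum.inr '' (Sum.inr ⁻¹' B)) := by
    rw [Set.disjoint_left]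
    rintro x ⟨a, _, rfl⟩ ⟨b, _, hb⟩
    exact Sum.inl_ne_inr hb.symm
  conv_lhs => rw [hdecomp]
  rw [Set.ncard_union_eq hd (Set.toFinite _) (Set.toFinite _), h1, h2]

lemma ncard_le_card {γ : Type*} [Fintype γ] (B : Set γ) : B.ncard ≤ Fintype.card γ := by
  have := Set.ncard_le_ncard (Set.subset_univ B) (Set.toFinite _)
  simpa [Set.ncard_univ, Nat.card_eq_fintype_card] using this

lemma ncard_add_ncard_le_card {γ : Type*} [Fintype γ] {B C : Set γ} (h : Disjoint B C) :
    B.ncard + C.ncard ≤ Fintype.card γ := by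
  rw [← Set.ncard_union_eq h (Set.toFinite _) (Set.toFinite _)]
  exact ncard_le_card _

lemma walk_length_one {G : SimpleGraph V} {u v : V} (p : G.Walk u v) (h : p.length = 1) :
    G.Adj u v ∧ p.support = [u, v] := by
  cases p with
  | nil => simp at h
  | cons ha q =>
    cases q with
    | nil => simpa using ha
    | cons hb r => simp [SimpleGraph.Walk.length_cons] at h

lemma walk_length_two {G : SimpleGraph V} {u v : V} (p : G.Walk u v) (h : p.length = 2) :
    ∃ x, G.Adj u x ∧ G.Adj x v ∧ p.support = [u, x, v] := by
  cases p with
  | nil => simp at h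
  | cons ha q =>
    cases q with
    | nil => simp at h
    | cons hb r =>
      cases r with
      | nil => exact ⟨_, ha, by simpa using hb, by simp⟩
      | cons hc s => simp [SimpleGraph.Walk.length_cons] at h

lemma dist_eq_two {G : SimpleGraph V} {u v x : V} (huv : u ≠ v) (hna : ¬ G.Adj u v)
    (h1 : G.Adj u x) (h2 : G.Adj x v) : G.dist u v = 2 := by
  have hr : G.Reachable u v := ⟨SimpleGraph.Walk.cons h1 (SimpleGraph.Walk.cons h2 SimpleGraph.Walk.nil)⟩
  have hle : G.dist u v ≤ 2 := by
    simpa using SimpleGraph.dist_le (SimpleGraph.Walk.cons h1 (SimpleGraph.Walk.cons h2 SimpleGraph.Walk.nil))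
  have h0 : G.dist u v ≠ 0 := SimpleGraph.dist_ne_zero_iff_ne_and_reachable.mpr ⟨huv, hr⟩
  have h1' : G.dist u v ≠ 1 := by
    intro hd
    obtain ⟨p, hp⟩ := SimpleGraph.exists_walk_of_dist_ne_zero h0
    rw [hd] at hp
    exact hna (walk_length_one p hp).1
  omega

lemma gp_of_clusters {G : SimpleGraph V} {S : Set V}
    (hcn : ∀ u ∈ S, ∀ v ∈ S, u ≠ v → ¬G.Adj u v → ∃ x, G.Adj u x ∧ G.Adj x v)
    (hns : ∀ u ∈ S, ∀ v ∈ S, ∀ w ∈ S, ¬G.Adj u v → G.Adj u w → G.Adj w v → u = v) :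
    IsGPSet G S := by
  intro u hu v hv p hp w hw hws
  by_cases huv : u = v
  · subst huv
    rw [SimpleGraph.dist_self] at hp
    cases p with
    | nil => left; simpa using hws
    | cons h q => simp [SimpleGraph.Walk.length_cons] at hp
  by_cases hadj : G.Adj u v
  · have hd : G.dist u v = 1 := by
      have hle : G.dist u v ≤ 1 := by
        simpa using SimpleGraph.dist_le (SimpleGraph.Walk.cons hadj SimpleGraph.Walk.nil)
      have h0 : G.dist u v ≠ 0 := SimpleGraph.dist_ne_zero_iff_ne_and_reachable.mpr ⟨huv, ⟨p⟩⟩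
      omega
    rw [hd] at hp
    have := (walk_length_one p hp).2
    rw [this] at hws
    simpa using hws
  · obtain ⟨x, hx1, hx2⟩ := hcn u hu v hv huv hadj
    have hd : G.dist u v = 2 := dist_eq_two huv hadj hx1 hx2
    rw [hd] at hp
    obtain ⟨y, hy1, hy2, hy3⟩ := walk_length_two p hp
    rw [hy3] at hws
    simp at hws
    rcases hws with h | h | h
    · exact Or.inl h
    · subst h
      exact absurd (hns u hu v hv w hw hadj hy1 hy2) huv
    · exact Or.inr h

lemma clusters_of_gp {G : SimpleGraph V} {S : Set V} (h : IsGPSet G S) :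
    ∀ u ∈ S, ∀ v ∈ S, ∀ w ∈ S, G.Adj u w → G.Adj w v → u = v ∨ G.Adj u v := by
  intro u hu v hv w hw h1 h2
  by_contra hc
  push_neg at hc
  obtain ⟨huv, hna⟩ := hc
  have hd : G.dist u v = 2 := dist_eq_two huv hna h1 h2
  have := h u hu v hv (SimpleGraph.Walk.cons h1 (SimpleGraph.Walk.cons h2 SimpleGraph.Walk.nil))
    (by simp [hd]) w hw (by simp)
  rcases this with h' | h'
  · subst h'; exact G.irrefl h1
  · subst h'; exact G.irrefl h2

section MycAdj
variable {G : SimpleGraph V}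

@[simp] lemma myc_adj_oo {u v : V} :
    (Mycielskian G).Adj (some (Sum.inl u)) (some (Sum.inl v)) ↔ G.Adj u v := by
  constructor
  · rintro ⟨hne, h | h⟩ <;>
      obtain (⟨a,b,hab,h1,h2⟩|⟨a,b,hab,h1,h2⟩|⟨a,h1,h2⟩) := h <;>
      simp_all <;>
      first | exact hab | exact hab.symm
  · intro h
    exact ⟨by simp [h.ne], Or.inl (Or.inl ⟨u, v, h, rfl, rfl⟩)⟩

@[simp] lemma myc_adj_ot {u v : V} :
    (Mycielskian G).Adj (some (Sum.inl u)) (some (Sum.inr v)) ↔ G.Adj u v := by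
  constructor
  · rintro ⟨hne, h | h⟩ <;>
      obtain (⟨a,b,hab,h1,h2⟩|⟨a,b,hab,h1,h2⟩|⟨a,h1,h2⟩) := h <;>
      simp_all <;>
      first | exact hab | exact hab.symm
  · intro h
    exact ⟨by simp, Or.inl (Or.inr (Or.inl ⟨u, v, h, rfl, rfl⟩))⟩

@[simp] lemma myc_adj_to {u v : V} :
    (Mycielskian G).Adj (some (Sum.inr u)) (some (Sum.inl v)) ↔ G.Adj v u :=
  ⟨fun h => myc_adj_ot.mp h.symm, fun h => (myc_adj_ot.mpr h).symm⟩

@[simp] lemma myc_adj_tt {u v : V} :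
    ¬ (Mycielskian G).Adj (some (Sum.inr u)) (some (Sum.inr v)) := by
  simp [Mycielskian, fromRel_adj]

@[simp] lemma myc_adj_tr {u : V} :
    (Mycielskian G).Adj (some (Sum.inr u)) none := by
  simp [Mycielskian, fromRel_adj]

@[simp] lemma myc_adj_rt {u : V} :
    (Mycielskian G).Adj none (some (Sum.inr u)) := myc_adj_tr.symm

@[simp] lemma myc_adj_or {u : V} :
    ¬ (Mycielskian G).Adj (some (Sum.inl u)) none := by
  simp [Mycielskian, fromRel_adj]

@[simp] lemma myc_adj_ro {u : V} :
    ¬ (Mycielskian G).Adj none (some (Sum.inl u)) := fun h => myc_adj_or h.symm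

end MycAdj

section GdAdj
variable {d : ℕ}

@[simp] lemma gd_adj_aa {i j : Fin d} : ¬ (Gd d).Adj (Sum.inl i) (Sum.inl j) := by
  simp [Gd, fromRel_adj]

@[simp] lemma gd_adj_ab {i j : Fin d} :
    (Gd d).Adj (Sum.inl i) (Sum.inr (Sum.inl j)) ↔ i = j := by
  simp only [Gd, fromRel_adj, ne_eq, Sum.inl.injEq, Sum.inr.injEq, reduceCtorEq,
    and_false, false_and, exists_false, or_false, false_or, exists_eq_left, exists_eq_right,
    exists_and_left, exists_eq_left']
  aesop

@[simp] lemma gd_adj_ba {i j : Fin d} :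
    (Gd d).Adj (Sum.inr (Sum.inl i)) (Sum.inl j) ↔ j = i :=
  ⟨fun h => gd_adj_ab.mp h.symm, fun h => (gd_adj_ab.mpr h).symm⟩

@[simp] lemma gd_adj_ac {i : Fin d} {k : Fin (d-1)} :
    (Gd d).Adj (Sum.inl i) (Sum.inr (Sum.inr k)) := by
  simp [Gd, fromRel_adj]

@[simp] lemma gd_adj_ca {i : Fin d} {k : Fin (d-1)} :
    (Gd d).Adj (Sum.inr (Sum.inr k)) (Sum.inl i) := gd_adj_ac.symm

@[simp] lemma gd_adj_bb {i j : Fin d} :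
    (Gd d).Adj (Sum.inr (Sum.inl i)) (Sum.inr (Sum.inl j)) ↔ i ≠ j := by
  simp only [Gd, fromRel_adj, ne_eq, Sum.inr.injEq, Sum.inl.injEq, reduceCtorEq,
    and_false, false_and, exists_false, or_false, false_or]
  aesop

@[simp] lemma gd_adj_bc {i : Fin d} {k : Fin (d-1)} :
    ¬ (Gd d).Adj (Sum.inr (Sum.inl i)) (Sum.inr (Sum.inr k)) := by
  simp [Gd, fromRel_adj]

@[simp] lemma gd_adj_cb {i : Fin d} {k : Fin (d-1)} :
    ¬ (Gd d).Adj (Sum.inr (Sum.inr k)) (Sum.inr (Sum.inl i)) := fun h => gd_adj_bc h.symm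

@[simp] lemma gd_adj_cc {k l : Fin (d-1)} :
    ¬ (Gd d).Adj (Sum.inr (Sum.inr k)) (Sum.inr (Sum.inr l)) := by
  simp [Gd, fromRel_adj]

end GdAdj

section Reg
variable {d : ℕ}

lemma ncard_univ_fin (n : ℕ) : (Set.univ : Set (Fin n)).ncard = n := by
  simp [Set.ncard_univ]

lemma gd_regular (hd : 2 ≤ d) : IsRegularDeg (Gd d) d := by
  intro v
  rcases v with i | v
  · -- a_i : neighbors = {b_i} ∪ all c's
    have hset : (Gd d).neighborSet (Sum.inl i) =
        insert (Sum.inr (Sum.inl i)) ((fun k => (Sum.inr (Sum.inr k) : Fin d ⊕ (Fin d ⊕ Fin (d-1)))) '' Set.univ) := by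
      ext w
      rcases w with j | j | k <;>
        simp [SimpleGraph.mem_neighborSet, eq_comm]
    rw [hset, Set.ncard_insert_of_notMem (by simp)]
    rw [Set.ncard_image_of_injective _ (fun a b h => by simpa using h), ncard_univ_fin]
    omega
  · rcases v with i | k
    · -- b_i : neighbors = {a_i} ∪ {b_j : j ≠ i}
      have hset : (Gd d).neighborSet (Sum.inr (Sum.inl i)) =
          insert (Sum.inl i) ((fun j => (Sum.inr (Sum.inl j) : Fin d ⊕ (Fin d ⊕ Fin (d-1)))) '' {j | j ≠ i}) := by
        ext w
        rcases w with j | j | k <;>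
          simp [SimpleGraph.mem_neighborSet, eq_comm, ne_comm]
      rw [hset, Set.ncard_insert_of_notMem (by simp)]
      rw [Set.ncard_image_of_injective _ (fun a b h => by simpa using h)]
      have h2 : ({j | j ≠ i} : Set (Fin d)).ncard = d - 1 := by
        have : ({j | j ≠ i} : Set (Fin d)) = {i}ᶜ := by ext j; simp
        rw [this]
        have hu : (Set.univ : Set (Fin d)).ncard = ({i} : Set (Fin d)).ncard + ({i}ᶜ : Set (Fin d)).ncard := by
          rw [← Set.ncard_union_eq disjoint_compl_right (Set.toFinite _) (Set.toFinite _)]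
          simp
        rw [ncard_univ_fin] at hu
        simp at hu
        omega
      rw [h2]
      omega
    · -- c_k : neighbors = all a's
      have hset : (Gd d).neighborSet (Sum.inr (Sum.inr k)) =
          (fun i => (Sum.inl i : Fin d ⊕ (Fin d ⊕ Fin (d-1)))) '' Set.univ := by
        ext w
        rcases w with j | j | l <;>
          simp [SimpleGraph.mem_neighborSet]
      rw [hset, Set.ncard_image_of_injective _ (fun a b h => by simpa using h), ncard_univ_fin]
end Reg

section Lower
variable {d : ℕ}

abbrev Wd (d : ℕ) := Fin d ⊕ (Fin d ⊕ Fin (d - 1))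

def S0 (d : ℕ) : Set (Option (Wd d ⊕ Wd d)) :=
  {x | ∃ i : Fin d, x = some (Sum.inl (Sum.inl i)) ∨ x = some (Sum.inr (Sum.inl i)) ∨
    x = some (Sum.inr (Sum.inr (Sum.inl i)))}

lemma S0_gp (hd : 2 ≤ d) : IsGPSet (Mycielskian (Gd d)) (S0 d) := by
  have c0 : Fin (d - 1) := ⟨0, by omega⟩
  apply gp_of_clusters
  · -- common neighbors
    rintro u ⟨i, hu⟩ v ⟨j, hv⟩ hne hna
    rcases hu with rfl | rfl | rfl <;> rcases hv with rfl | rfl | rfl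
    · -- oa i, oa j
      exact ⟨some (Sum.inl (Sum.inr (Sum.inr c0))), by simp, by simp⟩
    · -- oa i, ta j
      exact ⟨some (Sum.inl (Sum.inr (Sum.inr c0))), by simp, by simp⟩
    · -- oa i, tb j : i ≠ j from hna
      have hij : i ≠ j := by
        intro h; subst h; exact hna (by simp)
      exact ⟨some (Sum.inl (Sum.inr (Sum.inl i))), by simp, by simp [hij]⟩
    · -- ta i, oa j
      exact ⟨some (Sum.inl (Sum.inr (Sum.inr c0))), by simp, by simp⟩
    · exact ⟨none, by simp, by simp⟩
    · exact ⟨none, by simp, by simp⟩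
    · -- tb i, oa j
      have hij : j ≠ i := by
        intro h; subst h; exact hna (by simp)
      exact ⟨some (Sum.inl (Sum.inr (Sum.inl j))), by simp [hij], by simp⟩
    · exact ⟨none, by simp, by simp⟩
    · exact ⟨none, by simp, by simp⟩
  · -- no third point
    rintro u ⟨i, hu⟩ v ⟨j, hv⟩ w ⟨k, hw⟩ hna h1 h2
    rcases hw with rfl | rfl | rfl <;> rcases hu with rfl | rfl | rfl <;>
      rcases hv with rfl | rfl | rfl <;> simp_all

lemma S0_ncard : (S0 d).ncard = 3 * d := by
  have h1 : S0 d = ((fun i : Fin d => some (Sum.inl (Sum.inl i) : Wd d ⊕ Wd d)) '' Set.univ) ∪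
      (((fun i : Fin d => some (Sum.inr (Sum.inl i) : Wd d ⊕ Wd d)) '' Set.univ) ∪
      ((fun i : Fin d => some (Sum.inr (Sum.inr (Sum.inl i)) : Wd d ⊕ Wd d)) '' Set.univ)) := by
    ext x
    simp [S0]
    constructor
    · rintro ⟨i, h | h | h⟩
      exacts [Or.inl ⟨i, h.symm⟩, Or.inr (Or.inl ⟨i, h.symm⟩), Or.inr (Or.inr ⟨i, h.symm⟩)]
    · rintro (⟨i, h⟩ | ⟨i, h⟩ | ⟨i, h⟩)
      exacts [⟨i, Or.inl h.symm⟩, ⟨i, Or.inr (Or.inl h.symm)⟩, ⟨i, Or.inr (Or.inr h.symm)⟩]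
  have hd1 : Disjoint ((fun i : Fin d => some (Sum.inr (Sum.inl i) : Wd d ⊕ Wd d)) '' Set.univ)
      ((fun i : Fin d => some (Sum.inr (Sum.inr (Sum.inl i)) : Wd d ⊕ Wd d)) '' Set.univ) := by
    rw [Set.disjoint_left]; rintro x ⟨a, _, rfl⟩ ⟨b, _, hb⟩; simp at hb
  have hd2 : Disjoint ((fun i : Fin d => some (Sum.inl (Sum.inl i) : Wd d ⊕ Wd d)) '' Set.univ)
      (((fun i : Fin d => some (Sum.inr (Sum.inl i) : Wd d ⊕ Wd d)) '' Set.univ) ∪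
       ((fun i : Fin d => some (Sum.inr (Sum.inr (Sum.inl i)) : Wd d ⊕ Wd d)) '' Set.univ)) := by
    rw [Set.disjoint_left]
    rintro x ⟨a, _, rfl⟩ hx
    rcases hx with ⟨b, _, hb⟩ | ⟨b, _, hb⟩ <;> simp at hb
  rw [h1, Set.ncard_union_eq hd2 (Set.toFinite _) (Set.toFinite _),
    Set.ncard_union_eq hd1 (Set.toFinite _) (Set.toFinite _),
    Set.ncard_image_of_injective _ (fun a b h => by simpa using h),
    Set.ncard_image_of_injective _ (fun a b h => by simpa using h),
    Set.ncard_image_of_injective _ (fun a b h => by simpa using h), ncard_univ_fin]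
  ring
end Lower

section Upper
variable {d : ℕ}

lemma main_upper (hd : 2 ≤ d) {S : Set (Option (Wd d ⊕ Wd d))}
    (h : IsGPSet (Mycielskian (Gd d)) S) : S.ncard ≤ 3 * d := by
  classical
  have hP := clusters_of_gp h
  set A1 : Set (Fin d) := {i | some (Sum.inl (Sum.inl i)) ∈ S} with hA1def
  set A2 : Set (Fin d) := {i | some (Sum.inl (Sum.inr (Sum.inl i))) ∈ S} with hA2def
  set A4 : Set (Fin (d-1)) := {k | some (Sum.inl (Sum.inr (Sum.inr k))) ∈ S} with hA4def
  set T1 : Set (Fin d) := {i | some (Sum.inr (Sum.inl i)) ∈ S} with hT1def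
  set T2 : Set (Fin d) := {i | some (Sum.inr (Sum.inr (Sum.inl i))) ∈ S} with hT2def
  set T4 : Set (Fin (d-1)) := {k | some (Sum.inr (Sum.inr (Sum.inr k))) ∈ S} with hT4def
  -- cardinality decomposition
  have hAeq : (Sum.inl ⁻¹' (some ⁻¹' S) : Set (Wd d)).ncard = A1.ncard + (A2.ncard + A4.ncard) := by
    rw [ncard_sum, ncard_sum]; rfl
  have hTeq : (Sum.inr ⁻¹' (some ⁻¹' S) : Set (Wd d)).ncard = T1.ncard + (T2.ncard + T4.ncard) := by
    rw [ncard_sum, ncard_sum]; rfl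
  have hSsum : S.ncard = A1.ncard + A2.ncard + A4.ncard + T1.ncard + T2.ncard + T4.ncard
      + (if none ∈ S then 1 else 0) := by
    by_cases hr : none ∈ S
    · rw [ncard_option_mem hr, ncard_sum, hAeq, hTeq, if_pos hr]; ring
    · rw [ncard_option_notMem hr, ncard_sum, hAeq, hTeq, if_neg hr]; ring
  -- trivial bounds
  have bA1 : A1.ncard ≤ d := by simpa using ncard_le_card A1
  have bA2 : A2.ncard ≤ d := by simpa using ncard_le_card A2
  have bA4 : A4.ncard ≤ d - 1 := by simpa using ncard_le_card A4
  have bT1 : T1.ncard ≤ d := by simpa using ncard_le_card T1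
  have bT2 : T2.ncard ≤ d := by simpa using ncard_le_card T2
  have bT4 : T4.ncard ≤ d - 1 := by simpa using ncard_le_card T4
  -- K0 : A4 nonempty → A1 subsingleton
  have hK0 : A4.Nonempty → A1.ncard ≤ 1 := by
    rintro ⟨k, hk⟩
    refine (Set.ncard_le_one (Set.toFinite _)).mpr (fun i hi j hj => ?_)
    have := hP _ hi _ hj _ hk (by simp) (by simp)
    rcases this with h' | h'
    · simpa using h'
    · simp at h'
  -- K1 : T4 nonempty → A1 subsingleton
  have hK1 : T4.Nonempty → A1.ncard ≤ 1 := by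
    rintro ⟨k, hk⟩
    refine (Set.ncard_le_one (Set.toFinite _)).mpr (fun i hi j hj => ?_)
    have := hP _ hi _ hj _ hk (by simp) (by simp)
    rcases this with h' | h'
    · simpa using h'
    · simp at h'
  -- K2a : T1 nonempty → A4 subsingleton
  have hK2a : T1.Nonempty → A4.ncard ≤ 1 := by
    rintro ⟨i, hi⟩
    refine (Set.ncard_le_one (Set.toFinite _)).mpr (fun k hk l hl => ?_)
    have := hP _ hk _ hl _ hi (by simp) (by simp)
    rcases this with h' | h'
    · simpa using h'
    · simp at h'
  -- K2b : A4 nonempty → T1 subsingleton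
  have hK2b : A4.Nonempty → T1.ncard ≤ 1 := by
    rintro ⟨k, hk⟩
    refine (Set.ncard_le_one (Set.toFinite _)).mpr (fun i hi j hj => ?_)
    have := hP _ hi _ hj _ hk (by simp) (by simp)
    rcases this with h' | h'
    · simpa using h'
    · simp at h'
  -- K3 : two elements of T2 different from some b ∈ A2 coincide
  have hK3 : ∀ b ∈ A2, ∀ p ∈ T2, ∀ q ∈ T2, p ≠ b → q ≠ b → p = q := by
    intro b hb p hp q hq hpb hqb
    have := hP _ hp _ hq _ hb (by simp [Ne.symm hpb]) (by simp [Ne.symm hqb])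
    rcases this with h' | h'
    · simpa using h'
    · simp at h'
  -- K7 : if A2 has ≥ 2 elements then A2 and T2 are disjoint
  have hK7 : 2 ≤ A2.ncard → ∀ b ∈ A2, b ∉ T2 := by
    intro h2 b hb hbT
    obtain ⟨b', hb', hbb'⟩ := Set.exists_ne_of_one_lt_ncard (show 1 < A2.ncard by omega) b
    have := hP _ hb _ hbT _ hb' (by simp [Ne.symm hbb']) (by simp [hbb'])
    rcases this with h' | h'
    · simp at h'
    · simp at h'
  -- K5 : if A2 has ≥ 2 elements then T2 is subsingleton
  have hK5 : 2 ≤ A2.ncard → T2.ncard ≤ 1 := by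
    intro h2
    obtain ⟨b, hb⟩ := Set.nonempty_of_ncard_ne_zero (by omega : A2.ncard ≠ 0)
    refine (Set.ncard_le_one (Set.toFinite _)).mpr (fun p hp q hq => ?_)
    have hbT := hK7 h2 b hb
    exact hK3 b hb p hp q hq (fun h' => hbT (h' ▸ hp)) (fun h' => hbT (h' ▸ hq))
  -- K3' : A2 nonempty → T2.ncard ≤ 2
  have hK3' : A2.Nonempty → T2.ncard ≤ 2 := by
    rintro ⟨b, hb⟩
    have hsub : T2 ⊆ insert b (T2 \ {b}) := by
      intro p hp
      by_cases hpb : p = b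
      · simp [hpb]
      · exact Set.mem_insert_of_mem _ ⟨hp, hpb⟩
    have h1 : (T2 \ {b}).ncard ≤ 1 :=
      (Set.ncard_le_one (Set.toFinite _)).mpr
        (fun p hp q hq => hK3 b hb p hp.1 q hq.1 hp.2 hq.2)
    calc T2.ncard ≤ (insert b (T2 \ {b})).ncard :=
          Set.ncard_le_ncard hsub (Set.toFinite _)
      _ ≤ (T2 \ {b}).ncard + 1 := Set.ncard_insert_le _ _
      _ ≤ 2 := by omega
  -- K6 : A2 nonempty and T2 large → A1 and T2 disjoint
  have hK6 : A2.Nonempty → 2 ≤ T2.ncard → ∀ j ∈ A1, j ∉ T2 := by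
    rintro ⟨b, hb⟩ h2 j hj hjT
    have hbT2 : b ∈ T2 := by
      by_contra hbT
      have : T2.ncard ≤ 1 :=
        (Set.ncard_le_one (Set.toFinite _)).mpr
          (fun p hp q hq => hK3 b hb p hp q hq
            (fun h' => hbT (h' ▸ hp)) (fun h' => hbT (h' ▸ hq)))
      omega
    by_cases hjb : j = b
    · subst hjb
      obtain ⟨q, hq, hqj⟩ := Set.exists_ne_of_one_lt_ncard (show 1 < T2.ncard by omega) j
      have := hP _ hq _ hj _ hb (by simp [Ne.symm hqj]) (by simp)
      rcases this with h' | h'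
      · simp at h'
      · simp [Ne.symm hqj] at h'
    · have := hP _ hb _ hj _ hjT (by simp [Ne.symm hjb]) (by simp)
      rcases this with h' | h'
      · simp at h'
      · simp at h'
        exact hjb h'
  -- combined bound 1 : A1 + T4 ≤ d
  have h14 : A1.ncard + T4.ncard ≤ d := by
    rcases Set.eq_empty_or_nonempty T4 with he | hne
    · rw [he, Set.ncard_empty]; omega
    · have := hK1 hne; omega
  -- combined bound 2 : A4 + T1 ≤ d
  have h41 : A4.ncard + T1.ncard ≤ d := by
    rcases Set.eq_empty_or_nonempty A4 with he | hne
    · rw [he, Set.ncard_empty]; omega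
    · have := hK2b hne
      rcases Set.eq_empty_or_nonempty T1 with he' | hne'
      · rw [he', Set.ncard_empty]; omega
      · have := hK2a hne'; omega
  -- combined bound 3 : A1 + A4 ≤ d
  have h04 : A1.ncard + A4.ncard ≤ d := by
    rcases Set.eq_empty_or_nonempty A4 with he | hne
    · rw [he, Set.ncard_empty]; omega
    · have := hK0 hne; omega
  by_cases hr : none ∈ S
  · -- root in S : at most one twin in S
    rw [if_pos hr] at hSsum
    have hT1' : T1.ncard + (T2.ncard + T4.ncard) ≤ 1 := by
      rw [← hTeq]
      refine (Set.ncard_le_one (Set.toFinite _)).mpr (fun x hx y hy => ?_)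
      have := hP _ hx _ hy _ hr (by rcases x with _|_ <;> simp) (by rcases y with _|_ <;> simp)
      rcases this with h' | h'
      · simpa using h'
      · exfalso; rcases x with x|x <;> rcases y with y|y <;> simp at h'
    omega
  · rw [if_neg hr] at hSsum
    rcases Set.eq_empty_or_nonempty A2 with hA2e | hA2ne
    · have : A2.ncard = 0 := by rw [hA2e, Set.ncard_empty]
      omega
    · by_cases h2a : 2 ≤ A2.ncard
      · have hτ := hK5 h2a
        have hdisj : Disjoint A2 T2 :=
          Set.disjoint_left.mpr (fun b hb hbT => hK7 h2a b hb hbT)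
        have h22 : A2.ncard + T2.ncard ≤ d := by
          simpa using ncard_add_ncard_le_card hdisj
        omega
      · have hα2 : A2.ncard ≤ 1 := by omega
        by_cases h2t : 2 ≤ T2.ncard
        · have hdisj : Disjoint A1 T2 :=
            Set.disjoint_left.mpr (fun j hj hjT => hK6 hA2ne h2t j hj hjT)
          have h12 : A1.ncard + T2.ncard ≤ d := by
            simpa using ncard_add_ncard_le_card hdisj
          omega
        · have hτ : T2.ncard ≤ 1 := by omega
          omega
end Upper


end Helpers

/-- For every `d ≥ 2` there is a `d`-regular graph of order `n = 3d - 1`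
whose Mycielskian has general position number `n + 1 = 3d`; indeed the graph `G(d)`
has this property. -/
theorem gpNumber_mycielskian_Gd (d : ℕ) (hd : 2 ≤ d) :
    IsRegularDeg (Gd d) d ∧
    Fintype.card (Fin d ⊕ (Fin d ⊕ Fin (d - 1))) = 3 * d - 1 ∧
    gpNumber (Mycielskian (Gd d)) = 3 * d := by
  refine ⟨gd_regular hd, ?_, ?_⟩
  · simp only [Fintype.card_sum, Fintype.card_fin]
    omega
  · have hub : ∀ k ∈ {k | ∃ S : Set (Option (Wd d ⊕ Wd d)),
        IsGPSet (Mycielskian (Gd d)) S ∧ S.ncard = k}, k ≤ 3 * d := by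
      rintro k ⟨S, hS, rfl⟩
      exact main_upper hd hS
    have hmem : 3 * d ∈ {k | ∃ S : Set (Option (Wd d ⊕ Wd d)),
        IsGPSet (Mycielskian (Gd d)) S ∧ S.ncard = k} := ⟨S0 d, S0_gp hd, S0_ncard⟩
    exact le_antisymm (csSup_le ⟨3 * d, hmem⟩ hub)
      (le_csSup ⟨3 * d, fun k hk => hub k hk⟩ hmem)
end

section
/- Let T be a tree of order n ≥ 3 in which every NT vertex is adjacent to exactly one leaf (equivalently, the number of leaves ℓ(T) equals the number of NT vertices w(T)). Then gp(μ(T)) = n. -/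
open SimpleGraph

variable {V : Type*}

/-- A leaf of a graph: a vertex of degree one. -/
def IsLeafVert (G : SimpleGraph V) (v : V) : Prop :=
  (G.neighborSet v).ncard = 1

/-- A next-to-terminal (NT) vertex: a vertex adjacent to a leaf. -/
def IsNTVert (G : SimpleGraph V) (v : V) : Prop :=
  ∃ u, G.Adj v u ∧ IsLeafVert G u

section MAdj
variable {G : SimpleGraph V} {a b : V}

@[simp] lemma madj_inl_inl : (Mycielskian G).Adj (some (Sum.inl a)) (some (Sum.inl b)) ↔ G.Adj a b := by
  constructor
  · rintro ⟨hne, h | h⟩ <;>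
      rcases h with (⟨u, v, huv, h1, h2⟩ | ⟨u, v, huv, h1, h2⟩ | ⟨u, h1, h2⟩) <;>
      simp_all <;> subst_vars <;> first | exact huv | exact huv.symm
  · intro h
    exact ⟨by simp [h.ne], Or.inl (Or.inl ⟨a, b, h, rfl, rfl⟩)⟩

@[simp] lemma madj_inl_inr : (Mycielskian G).Adj (some (Sum.inl a)) (some (Sum.inr b)) ↔ G.Adj a b := by
  constructor
  · rintro ⟨hne, h | h⟩ <;>
      rcases h with (⟨u, v, huv, h1, h2⟩ | ⟨u, v, huv, h1, h2⟩ | ⟨u, h1, h2⟩) <;>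
      simp_all <;> subst_vars <;> first | exact huv | exact huv.symm
  · intro h
    exact ⟨by simp, Or.inl (Or.inr (Or.inl ⟨a, b, h, rfl, rfl⟩))⟩

@[simp] lemma madj_inr_inl : (Mycielskian G).Adj (some (Sum.inr a)) (some (Sum.inl b)) ↔ G.Adj b a :=
  ⟨fun h => madj_inl_inr.1 h.symm, fun h => (madj_inl_inr.2 h).symm⟩

@[simp] lemma madj_inr_inr : ¬ (Mycielskian G).Adj (some (Sum.inr a)) (some (Sum.inr b)) := by
  rintro ⟨hne, h | h⟩ <;>
    rcases h with (⟨u, v, huv, h1, h2⟩ | ⟨u, v, huv, h1, h2⟩ | ⟨u, h1, h2⟩) <;> simp_all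

@[simp] lemma madj_inr_none : (Mycielskian G).Adj (some (Sum.inr a)) none := by
  exact ⟨by simp, Or.inl (Or.inr (Or.inr ⟨a, rfl, rfl⟩))⟩

@[simp] lemma madj_none_inr : (Mycielskian G).Adj none (some (Sum.inr a)) := madj_inr_none.symm

@[simp] lemma madj_inl_none : ¬ (Mycielskian G).Adj (some (Sum.inl a)) none := by
  rintro ⟨hne, h | h⟩ <;>
    rcases h with (⟨u, v, huv, h1, h2⟩ | ⟨u, v, huv, h1, h2⟩ | ⟨u, h1, h2⟩) <;> simp_all

@[simp] lemma madj_none_inl : ¬ (Mycielskian G).Adj none (some (Sum.inl a)) :=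
  fun h => madj_inl_none h.symm

end MAdj

section DistLemmas
variable {G : SimpleGraph V} {u v : V}

lemma walk_two_le (hne : u ≠ v) (hadj : ¬ G.Adj u v) (q : G.Walk u v) : 2 ≤ q.length := by
  cases q with
  | nil => exact absurd rfl hne
  | cons h q' =>
    cases q' with
    | nil => exact absurd h hadj
    | cons h' q'' => simp only [SimpleGraph.Walk.length_cons]; omega

lemma walk_three_le (hne : u ≠ v) (hadj : ¬ G.Adj u v)
    (hc : ∀ z, G.Adj u z → G.Adj z v → False) (q : G.Walk u v) : 3 ≤ q.length := by
  cases q with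
  | nil => exact absurd rfl hne
  | cons h q' =>
    cases q' with
    | nil => exact absurd h hadj
    | cons h' q'' =>
      cases q'' with
      | nil => exact absurd (hc _ h h') id
      | cons h'' q''' => simp only [SimpleGraph.Walk.length_cons]; omega

lemma walk_four_le (hne : u ≠ v) (hadj : ¬ G.Adj u v)
    (hc : ∀ z, G.Adj u z → G.Adj z v → False)
    (h3 : ∀ z w, G.Adj u z → G.Adj z w → G.Adj w v → False) (q : G.Walk u v) :
    4 ≤ q.length := by
  cases q with
  | nil => exact absurd rfl hne
  | cons h q' =>
    cases q' with
    | nil => exact absurd h hadj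
    | cons h' q'' =>
      cases q'' with
      | nil => exact absurd (hc _ h h') id
      | cons h'' q''' =>
        cases q''' with
        | nil => exact absurd (h3 _ _ h h' h'') id
        | cons h4 q5 => simp only [SimpleGraph.Walk.length_cons]; omega

lemma dist_eq_of_walk {L : ℕ} (p : G.Walk u v) (hp : p.length = L)
    (hlb : ∀ q : G.Walk u v, L ≤ q.length) : G.dist u v = L := by
  have h1 : G.dist u v ≤ L := hp ▸ SimpleGraph.dist_le p
  have h2 : L ≤ G.dist u v := by
    obtain ⟨q, hq⟩ := (p.reachable).exists_walk_length_eq_dist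
    exact hq ▸ hlb q
  omega

lemma gp_contra {S : Set V} (hS : IsGPSet G S) (hu : u ∈ S) (hv : v ∈ S)
    (p : G.Walk u v) (hlen : p.length = G.dist u v) {w}
    (hw : w ∈ S) (hsup : w ∈ p.support) (h1 : w ≠ u) (h2 : w ≠ v) : False := by
  rcases hS u hu v hv p hlen w hw hsup with h | h
  · exact h1 h
  · exact h2 h

end DistLemmas

section Facts
variable {T : SimpleGraph V}

/-- Original vertex in the Mycielskian. -/
abbrev oL (a : V) : Option (V ⊕ V) := some (Sum.inl a)
/-- Twin vertex in the Mycielskian. -/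
abbrev oR (a : V) : Option (V ⊕ V) := some (Sum.inr a)

variable {a b v w x y z p q m b1 b2 b3 m1 m2 c : V}

lemma mdist_inr_inr (hne : b1 ≠ b2) : (Mycielskian T).dist (oR b1) (oR b2) = 2 := by
  refine dist_eq_of_walk
    (SimpleGraph.Walk.cons madj_inr_none (SimpleGraph.Walk.cons madj_none_inr SimpleGraph.Walk.nil))
    (by simp) (walk_two_le (by simp [hne]) (by simp))

lemma mdist_twin (hw : T.Adj b w) : (Mycielskian T).dist (oL b) (oR b) = 2 := by
  refine dist_eq_of_walk
    (SimpleGraph.Walk.cons (madj_inl_inl.2 hw) (SimpleGraph.Walk.cons (madj_inl_inr.2 hw.symm) SimpleGraph.Walk.nil))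
    (by simp) (walk_two_le (by simp) (by simp [T.irrefl]))

lemma mdist_inl_inl_two (hne : a ≠ b) (hadj : ¬ T.Adj a b) (h1 : T.Adj a m) (h2 : T.Adj m b) :
    (Mycielskian T).dist (oL a) (oL b) = 2 := by
  refine dist_eq_of_walk
    (SimpleGraph.Walk.cons (madj_inl_inl.2 h1) (SimpleGraph.Walk.cons (madj_inl_inl.2 h2) SimpleGraph.Walk.nil))
    (by simp) (walk_two_le (by simp [hne]) (by simp [hadj]))

lemma mdist_inl_inr_two (hne : a ≠ b) (hadj : ¬ T.Adj a b) (h1 : T.Adj a m) (h2 : T.Adj m b) :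
    (Mycielskian T).dist (oL a) (oR b) = 2 := by
  refine dist_eq_of_walk
    (SimpleGraph.Walk.cons (madj_inl_inl.2 h1) (SimpleGraph.Walk.cons (madj_inl_inr.2 h2) SimpleGraph.Walk.nil))
    (by simp) (walk_two_le (by simp) (by simp [hadj]))

lemma mdist_inl_inr_three (hne : a ≠ v) (hadj : ¬ T.Adj a v)
    (hc : ∀ c, T.Adj a c → T.Adj c v → False) (hw : T.Adj a w) :
    (Mycielskian T).dist (oL a) (oR v) = 3 := by
  refine dist_eq_of_walk
    (SimpleGraph.Walk.cons (madj_inl_inr.2 hw) (SimpleGraph.Walk.cons madj_inr_none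
      (SimpleGraph.Walk.cons madj_none_inr SimpleGraph.Walk.nil)))
    (by simp) (walk_three_le (by simp) (by simp [hadj]) ?_)
  rintro (_ | ⟨c | c⟩) h1 h2
  · simp at h1
  · exact hc c (madj_inl_inl.1 h1) (madj_inl_inr.1 h2)
  · simp at h2

lemma mdist_inl_inl_three (hne : a ≠ b) (hadj : ¬ T.Adj a b)
    (hc : ∀ c, T.Adj a c → T.Adj c b → False)
    (h1 : T.Adj a p) (h2 : T.Adj p q) (h3 : T.Adj q b) :
    (Mycielskian T).dist (oL a) (oL b) = 3 := by
  refine dist_eq_of_walk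
    (SimpleGraph.Walk.cons (madj_inl_inl.2 h1) (SimpleGraph.Walk.cons (madj_inl_inl.2 h2)
      (SimpleGraph.Walk.cons (madj_inl_inl.2 h3) SimpleGraph.Walk.nil)))
    (by simp) (walk_three_le (by simp [hne]) (by simp [hadj]) ?_)
  rintro (_ | ⟨c | c⟩) hh1 hh2
  · simp at hh1
  · exact hc c (madj_inl_inl.1 hh1) (madj_inl_inl.1 hh2)
  · exact hc c (madj_inl_inr.1 hh1) ((madj_inr_inl.1 hh2).symm)

lemma mdist_inl_inl_four (hne : a ≠ b) (hadj : ¬ T.Adj a b)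
    (hc : ∀ c, T.Adj a c → T.Adj c b → False)
    (h3w : ∀ c d, T.Adj a c → T.Adj c d → T.Adj d b → False)
    (h1 : T.Adj a m1) (h2 : T.Adj m1 c) (h3 : T.Adj c m2) (h4 : T.Adj m2 b) :
    (Mycielskian T).dist (oL a) (oL b) = 4 := by
  refine dist_eq_of_walk
    (SimpleGraph.Walk.cons (madj_inl_inl.2 h1) (SimpleGraph.Walk.cons (madj_inl_inl.2 h2)
      (SimpleGraph.Walk.cons (madj_inl_inl.2 h3)
      (SimpleGraph.Walk.cons (madj_inl_inl.2 h4) SimpleGraph.Walk.nil))))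
    (by simp) (walk_four_le (by simp [hne]) (by simp [hadj]) ?_ ?_)
  · rintro (_ | ⟨d | d⟩) hh1 hh2
    · simp at hh1
    · exact hc d (madj_inl_inl.1 hh1) (madj_inl_inl.1 hh2)
    · exact hc d (madj_inl_inr.1 hh1) ((madj_inr_inl.1 hh2).symm)
  · rintro (_ | ⟨d | d⟩) (_ | ⟨e | e⟩) hh1 hh2 hh3
    all_goals simp only [oL, madj_inl_inl, madj_inl_inr, madj_inr_inl, madj_inr_inr,
      madj_inl_none, madj_inr_none, madj_none_inl, madj_none_inr] at hh1 hh2 hh3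
    all_goals first
      | exact hh1.elim | exact hh2.elim | exact hh3.elim
      | exact h3w _ _ hh1 hh2 hh3
      | exact h3w _ _ hh1 hh2 hh3.symm
      | exact h3w _ _ hh1 hh2.symm hh3
      | exact h3w _ _ hh1 hh2.symm hh3.symm

variable {S : Set (Option (V ⊕ V))}

lemma fact_P1 (hS : IsGPSet (Mycielskian T) S) (hb1 : oR b1 ∈ S) (hb2 : oR b2 ∈ S)
    (hne : b1 ≠ b2) (hr : (none : Option (V ⊕ V)) ∈ S) : False := by
  refine gp_contra hS hb1 hb2
    (SimpleGraph.Walk.cons madj_inr_none (SimpleGraph.Walk.cons madj_none_inr SimpleGraph.Walk.nil))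
    (by simp [mdist_inr_inr hne]) hr (by simp) (by simp) (by simp)

lemma fact_P2 (hS : IsGPSet (Mycielskian T) S) (hb1 : oR b1 ∈ S) (hb2 : oR b2 ∈ S)
    (hne : b1 ≠ b2) (hz1 : T.Adj b1 z) (hz2 : T.Adj z b2) (hz : oL z ∈ S) : False := by
  refine gp_contra hS hb1 hb2
    (SimpleGraph.Walk.cons (madj_inr_inl.2 hz1.symm)
      (SimpleGraph.Walk.cons (madj_inl_inr.2 hz2) SimpleGraph.Walk.nil))
    (by simp [mdist_inr_inr hne]) hz (by simp) (by simp) (by simp)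

lemma fact_P3 (hS : IsGPSet (Mycielskian T) S) (hb : oL b ∈ S) (hb' : oR b ∈ S)
    (hw : T.Adj b w) (hwS : oL w ∈ S) : False := by
  refine gp_contra hS hb hb'
    (SimpleGraph.Walk.cons (madj_inl_inl.2 hw)
      (SimpleGraph.Walk.cons (madj_inl_inr.2 hw.symm) SimpleGraph.Walk.nil))
    (by simp [mdist_twin hw]) hwS (by simp) (by simp [hw.ne']) (by simp)

lemma fact_P4 (hS : IsGPSet (Mycielskian T) S) (ha : oL a ∈ S) (hv : oR v ∈ S)
    (hne : a ≠ v) (hadj : ¬ T.Adj a v) (hc : ∀ c, T.Adj a c → T.Adj c v → False)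
    (hw : T.Adj a w) : oR w ∉ S ∧ (none : Option (V ⊕ V)) ∉ S := by
  have hwv : w ≠ v := fun h => hadj (h ▸ hw)
  have hd := mdist_inl_inr_three (T := T) hne hadj hc hw
  constructor <;> intro hmem
  · exact gp_contra hS ha hv
      (SimpleGraph.Walk.cons (madj_inl_inr.2 hw) (SimpleGraph.Walk.cons madj_inr_none
        (SimpleGraph.Walk.cons madj_none_inr SimpleGraph.Walk.nil)))
      (by simp [hd]) hmem (by simp) (by simp) (by simp [hwv])
  · exact gp_contra hS ha hv
      (SimpleGraph.Walk.cons (madj_inl_inr.2 hw) (SimpleGraph.Walk.cons madj_inr_none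
        (SimpleGraph.Walk.cons madj_none_inr SimpleGraph.Walk.nil)))
      (by simp [hd]) hmem (by simp) (by simp) (by simp)

lemma fact_Q2 (hS : IsGPSet (Mycielskian T) S) (hx : oL x ∈ S) (hz : oL z ∈ S)
    (hne : x ≠ z) (hadj : ¬ T.Adj x z) (hm1 : T.Adj x m) (hm2 : T.Adj m z) :
    oL m ∉ S ∧ oR m ∉ S := by
  have hd := mdist_inl_inl_two (T := T) hne hadj hm1 hm2
  constructor <;> intro hmem
  · exact gp_contra hS hx hz
      (SimpleGraph.Walk.cons (madj_inl_inl.2 hm1)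
        (SimpleGraph.Walk.cons (madj_inl_inl.2 hm2) SimpleGraph.Walk.nil))
      (by simp [hd]) hmem (by simp) (by simp [hm1.ne']) (by simp [hm2.ne])
  · exact gp_contra hS hx hz
      (SimpleGraph.Walk.cons (madj_inl_inr.2 hm1)
        (SimpleGraph.Walk.cons (madj_inr_inl.2 hm2.symm) SimpleGraph.Walk.nil))
      (by simp [hd]) hmem (by simp) (by simp) (by simp)

lemma fact_Q3 (hS : IsGPSet (Mycielskian T) S) (hx : oL x ∈ S) (hz : oL z ∈ S)
    (hne : x ≠ z) (hadj : ¬ T.Adj x z) (hc : ∀ c, T.Adj x c → T.Adj c z → False)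
    (hp : T.Adj x p) (hpq : T.Adj p q) (hqz : T.Adj q z) :
    oL p ∉ S ∧ oL q ∉ S ∧ oR p ∉ S ∧ oR q ∉ S := by
  have hd := mdist_inl_inl_three (T := T) hne hadj hc hp hpq hqz
  have hpz : p ≠ z := fun h => hadj (h ▸ hp)
  have hqx : q ≠ x := fun h => hadj (h ▸ hqz)
  refine ⟨?_, ?_, ?_, ?_⟩ <;> intro hmem
  · exact gp_contra hS hx hz
      (SimpleGraph.Walk.cons (madj_inl_inl.2 hp) (SimpleGraph.Walk.cons (madj_inl_inl.2 hpq)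
        (SimpleGraph.Walk.cons (madj_inl_inl.2 hqz) SimpleGraph.Walk.nil)))
      (by simp [hd]) hmem (by simp) (by simp [hp.ne']) (by simp [hpz])
  · exact gp_contra hS hx hz
      (SimpleGraph.Walk.cons (madj_inl_inl.2 hp) (SimpleGraph.Walk.cons (madj_inl_inl.2 hpq)
        (SimpleGraph.Walk.cons (madj_inl_inl.2 hqz) SimpleGraph.Walk.nil)))
      (by simp [hd]) hmem (by simp) (by simp [hqx]) (by simp [hqz.ne])
  · exact gp_contra hS hx hz
      (SimpleGraph.Walk.cons (madj_inl_inr.2 hp) (SimpleGraph.Walk.cons (madj_inr_inl.2 hpq.symm)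
        (SimpleGraph.Walk.cons (madj_inl_inl.2 hqz) SimpleGraph.Walk.nil)))
      (by simp [hd]) hmem (by simp) (by simp) (by simp)
  · exact gp_contra hS hx hz
      (SimpleGraph.Walk.cons (madj_inl_inl.2 hp) (SimpleGraph.Walk.cons (madj_inl_inr.2 hpq)
        (SimpleGraph.Walk.cons (madj_inr_inl.2 hqz.symm) SimpleGraph.Walk.nil)))
      (by simp [hd]) hmem (by simp) (by simp) (by simp)

lemma fact_Q4 (hS : IsGPSet (Mycielskian T) S) (hx : oL x ∈ S) (hv : oR v ∈ S)
    (hne : x ≠ v) (hadj : ¬ T.Adj x v) (hc : ∀ c, T.Adj x c → T.Adj c v → False)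
    (hz : T.Adj x z) (hzy : T.Adj z y) (hyv : T.Adj y v) :
    oL z ∉ S ∧ oL y ∉ S ∧ oR z ∉ S := by
  have hd := mdist_inl_inr_three (T := T) hne hadj hc hz
  have hyx : y ≠ x := fun h => hadj (h ▸ hyv)
  have hzv : z ≠ v := fun h => hadj (h ▸ hz)
  refine ⟨?_, ?_, ?_⟩ <;> intro hmem
  · exact gp_contra hS hx hv
      (SimpleGraph.Walk.cons (madj_inl_inl.2 hz) (SimpleGraph.Walk.cons (madj_inl_inl.2 hzy)
        (SimpleGraph.Walk.cons (madj_inl_inr.2 hyv) SimpleGraph.Walk.nil)))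
      (by simp [hd]) hmem (by simp) (by simp [hz.ne']) (by simp)
  · exact gp_contra hS hx hv
      (SimpleGraph.Walk.cons (madj_inl_inl.2 hz) (SimpleGraph.Walk.cons (madj_inl_inl.2 hzy)
        (SimpleGraph.Walk.cons (madj_inl_inr.2 hyv) SimpleGraph.Walk.nil)))
      (by simp [hd]) hmem (by simp) (by simp [hyx]) (by simp)
  · exact gp_contra hS hx hv
      (SimpleGraph.Walk.cons (madj_inl_inr.2 hz) (SimpleGraph.Walk.cons (madj_inr_inl.2 hzy.symm)
        (SimpleGraph.Walk.cons (madj_inl_inr.2 hyv) SimpleGraph.Walk.nil)))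
      (by simp [hd]) hmem (by simp) (by simp) (by simp [hzv])

lemma fact_Q5 (hS : IsGPSet (Mycielskian T) S) (hx : oL b2 ∈ S) (hz : oL b3 ∈ S)
    (hne : b2 ≠ b3) (hadj : ¬ T.Adj b2 b3) (hc : ∀ c, T.Adj b2 c → T.Adj c b3 → False)
    (h3w : ∀ c d, T.Adj b2 c → T.Adj c d → T.Adj d b3 → False)
    (h1 : T.Adj b2 m1) (h2 : T.Adj m1 b) (h3 : T.Adj b m2) (h4 : T.Adj m2 b3) :
    oL b ∉ S := by
  intro hmem
  have hd := mdist_inl_inl_four (T := T) hne hadj hc h3w h1 h2 h3 h4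
  have hb2 : b ≠ b2 := fun h => hc m2 (h ▸ h3) h4
  have hb3 : b ≠ b3 := fun h => hc m1 h1 (h ▸ h2)
  exact gp_contra hS hx hz
    (SimpleGraph.Walk.cons (madj_inl_inl.2 h1) (SimpleGraph.Walk.cons (madj_inl_inl.2 h2)
      (SimpleGraph.Walk.cons (madj_inl_inl.2 h3)
      (SimpleGraph.Walk.cons (madj_inl_inl.2 h4) SimpleGraph.Walk.nil))))
    (by simp [hd]) hmem (by simp) (by simp [hb2]) (by simp [hb3])

end Facts

section Tree
variable {T : SimpleGraph V}

lemma paths_eq (hT : T.IsTree) {u v : V} (p q : T.Walk u v) (hp : p.IsPath) (hq : q.IsPath) :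
    p = q :=
  ((hT.existsUnique_path u v).unique hp hq)

lemma no_triangle (hT : T.IsTree) {a b c : V} (h1 : T.Adj a b) (h2 : T.Adj b c)
    (h3 : T.Adj c a) : False := by
  have hab := h1.ne
  have hbc := h2.ne
  have hca := h3.ne
  have := paths_eq hT (SimpleGraph.Walk.cons h1 SimpleGraph.Walk.nil)
    (SimpleGraph.Walk.cons h3.symm (SimpleGraph.Walk.cons h2.symm SimpleGraph.Walk.nil))
    (by simp [SimpleGraph.Walk.isPath_def, hab])
    (by simp [SimpleGraph.Walk.isPath_def]; tauto)
  have := congrArg SimpleGraph.Walk.length this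
  simp at this

lemma unique_midpoint (hT : T.IsTree) {a b m m' : V} (hab : a ≠ b)
    (h1 : T.Adj a m) (h2 : T.Adj m b) (h1' : T.Adj a m') (h2' : T.Adj m' b) : m = m' := by
  have := paths_eq hT
    (SimpleGraph.Walk.cons h1 (SimpleGraph.Walk.cons h2 SimpleGraph.Walk.nil))
    (SimpleGraph.Walk.cons h1' (SimpleGraph.Walk.cons h2' SimpleGraph.Walk.nil))
    (by simp [SimpleGraph.Walk.isPath_def, h1.ne, hab, h2.ne])
    (by simp [SimpleGraph.Walk.isPath_def, h1'.ne, hab, h2'.ne])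
  have := congrArg SimpleGraph.Walk.support this
  simp at this
  tauto

/-- From a path `a-m-b-w` in a tree (with suitable distinctness), `a` and `w` have
no common neighbour. -/
lemma no_common_of_path3 (hT : T.IsTree) {a m b w : V}
    (h1 : T.Adj a m) (h2 : T.Adj m b) (h3 : T.Adj b w)
    (ham : a ≠ b) (haw : a ≠ w) (hmw : m ≠ w) {c : V}
    (hc1 : T.Adj a c) (hc2 : T.Adj c w) : False := by
  have := paths_eq hT
    (SimpleGraph.Walk.cons h1 (SimpleGraph.Walk.cons h2 (SimpleGraph.Walk.cons h3
      SimpleGraph.Walk.nil)))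
    (SimpleGraph.Walk.cons hc1 (SimpleGraph.Walk.cons hc2 SimpleGraph.Walk.nil))
    (by simp [SimpleGraph.Walk.isPath_def, h1.ne, h2.ne, h3.ne, ham, haw, hmw])
    (by simp [SimpleGraph.Walk.isPath_def, hc1.ne, hc2.ne, haw])
  have := congrArg SimpleGraph.Walk.length this
  simp at this

/-- From a path `a-m1-b-m2-z` in a tree (with suitable distinctness), there is no
walk of length at most three from `a` to `z`. -/
lemma far4_of_path4 (hT : T.IsTree) {a m1 b m2 z : V}
    (h1 : T.Adj a m1) (h2 : T.Adj m1 b) (h3 : T.Adj b m2) (h4 : T.Adj m2 z)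
    (hab : a ≠ b) (ham2 : a ≠ m2) (haz : a ≠ z) (hm1m2 : m1 ≠ m2) (hm1z : m1 ≠ z)
    (hbz : b ≠ z) :
    ¬ T.Adj a z ∧ (∀ c, T.Adj a c → T.Adj c z → False) ∧
      (∀ c d, T.Adj a c → T.Adj c d → T.Adj d z → False) := by
  have hpath : (SimpleGraph.Walk.cons h1 (SimpleGraph.Walk.cons h2 (SimpleGraph.Walk.cons h3
      (SimpleGraph.Walk.cons h4 SimpleGraph.Walk.nil)))).IsPath := by
    simp [SimpleGraph.Walk.isPath_def, h1.ne, h2.ne, h3.ne, h4.ne, hab, ham2, haz, hm1m2,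
      hm1z, hbz]
  have hnadj : ¬ T.Adj a z := by
    intro hadj
    have := paths_eq hT (SimpleGraph.Walk.cons hadj SimpleGraph.Walk.nil) _
      (by simp [SimpleGraph.Walk.isPath_def, haz]) hpath
    have := congrArg SimpleGraph.Walk.length this
    simp at this
  refine ⟨hnadj, ?_, ?_⟩
  · intro c hc1 hc2
    have := paths_eq hT
      (SimpleGraph.Walk.cons hc1 (SimpleGraph.Walk.cons hc2 SimpleGraph.Walk.nil)) _
      (by simp [SimpleGraph.Walk.isPath_def, hc1.ne, hc2.ne, haz]) hpath
    have := congrArg SimpleGraph.Walk.length this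
    simp at this
  · intro c d hc1 hc2 hc3
    have hcz : c ≠ z := fun h => hnadj (h ▸ hc1)
    have had : a ≠ d := fun h => hnadj (h ▸ hc3)
    have := paths_eq hT
      (SimpleGraph.Walk.cons hc1 (SimpleGraph.Walk.cons hc2 (SimpleGraph.Walk.cons hc3
        SimpleGraph.Walk.nil))) _
      (by simp [SimpleGraph.Walk.isPath_def, hc1.ne, hc2.ne, hc3.ne, hcz, had, haz]) hpath
    have := congrArg SimpleGraph.Walk.length this
    simp at this

end Tree

section Structure
variable {T : SimpleGraph V}

lemma leaf_iff_degree [Fintype V] [DecidableRel T.Adj] {v : V} :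
    IsLeafVert T v ↔ T.degree v = 1 := by
  rw [IsLeafVert, ← SimpleGraph.card_neighborSet_eq_degree]
  rw [Set.ncard_eq_toFinset_card']
  simp

lemma leaf_nbr_eq {f s x : V} (hf : IsLeafVert T f) (hs : T.Adj f s) (hx : T.Adj f x) :
    x = s := by
  obtain ⟨m, hm⟩ := Set.ncard_eq_one.1 hf
  have h1 : s ∈ T.neighborSet f := hs
  have h2 : x ∈ T.neighborSet f := hx
  rw [hm] at h1 h2
  simp at h1 h2
  rw [h1, h2]

lemma exists_nbr (hc : T.Connected) [Fintype V] (hn : 2 ≤ Fintype.card V) (v : V) :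
    ∃ w, T.Adj v w := by
  obtain ⟨u, hu⟩ := Fintype.exists_ne_of_one_lt_card (by omega) v
  obtain ⟨p⟩ := hc.preconnected v u
  cases p with
  | nil => exact absurd rfl hu.symm
  | cons h _ => exact ⟨_, h⟩

/-- If every vertex two steps away from `w` coincides with `w`, then every vertex is
`w` or a neighbour of `w`. -/
lemma confine (hc : T.Connected) {w : V}
    (h : ∀ z, T.Adj w z → ∀ x, T.Adj z x → x = w) (v : V) : v = w ∨ T.Adj w v := by
  classical
  obtain ⟨p⟩ := hc.preconnected w v
  obtain ⟨q, hp⟩ : ∃ q : T.Walk w v, q.IsPath := ⟨p.toPath, p.toPath.2⟩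
  clear p
  cases q with
  | nil => exact Or.inl rfl
  | @cons _ u1 _ h1 q' =>
    cases q' with
    | nil => exact Or.inr h1
    | @cons _ u2 _ h2 q'' =>
      exfalso
      have hu2 : u2 = w := h u1 h1 u2 h2
      subst hu2
      have := hp.support_nodup
      simp at this

lemma exists_leaf [Fintype V] (hT : T.IsTree) (hn : 2 ≤ Fintype.card V) :
    ∃ f s, T.Adj s f ∧ IsLeafVert T f := by
  classical
  have hedge := hT.card_edgeFinset
  have hsum := SimpleGraph.sum_degrees_eq_twice_card_edges (G := T)
  by_contra hno
  push_neg at hno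
  have hdeg : ∀ v : V, 2 ≤ T.degree v := by
    intro v
    obtain ⟨w, hw⟩ := exists_nbr hT.isConnected hn v
    have h1 : 1 ≤ T.degree v := by
      rw [← SimpleGraph.card_neighborFinset_eq_degree]
      exact Finset.card_pos.2 ⟨w, by simp [hw]⟩
    rcases Nat.lt_or_ge (T.degree v) 2 with h | h
    · exfalso
      have : T.degree v = 1 := by omega
      exact hno v w hw.symm (leaf_iff_degree.2 this)
    · exact h
  have : 2 * Fintype.card V ≤ ∑ v : V, T.degree v := by
    calc 2 * Fintype.card V = ∑ _v : V, 2 := by simp [mul_comm]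
    _ ≤ ∑ v : V, T.degree v := Finset.sum_le_sum (fun i _ => hdeg i)
  omega

lemma exists_geodesic_P4 [Fintype V] (hT : T.IsTree) (hn : 3 ≤ Fintype.card V)
    (H : ∀ v, IsNTVert T v → ∃! u, T.Adj v u ∧ IsLeafVert T u) :
    ∃ f s y q : V, T.Adj f s ∧ T.Adj s y ∧ T.Adj y q ∧ ¬ T.Adj f y ∧ ¬ T.Adj s q ∧
      ¬ T.Adj f q ∧ (∀ c, T.Adj f c → T.Adj c q → False) ∧ f ≠ y ∧ s ≠ q ∧ f ≠ q := by
  classical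
  obtain ⟨f, s, hsf, hleaf⟩ := exists_leaf hT (by omega)
  -- s has a neighbour other than f
  have hsy : ∃ y, T.Adj s y ∧ y ≠ f := by
    by_contra hy
    push_neg at hy
    have hconf : ∀ v : V, v = s ∨ T.Adj s v := by
      refine confine hT.isConnected ?_
      intro z hz x hx
      have hzf : z = f := hy z hz
      subst hzf
      exact (leaf_nbr_eq hleaf hsf.symm hx).symm ▸ rfl
    have : (Finset.univ : Finset V) ⊆ {s, f} := by
      intro v _
      rcases hconf v with h | h
      · simp [h]
      · simp [hy v h]
    have h1 := Finset.card_le_card this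
    have h2 : ({s, f} : Finset V).card ≤ 2 := by
      apply le_trans (Finset.card_insert_le _ _)
      simp
    rw [Finset.card_univ] at h1
    omega
  obtain ⟨y, hsy, hyf⟩ := hsy
  -- y is not a leaf
  have hynl : ¬ IsLeafVert T y := by
    intro hyl
    have hNT : IsNTVert T s := ⟨f, hsf, hleaf⟩
    obtain ⟨u, _, hu⟩ := H s hNT
    have h1 := hu f ⟨hsf, hleaf⟩
    have h2 := hu y ⟨hsy, hyl⟩
    exact hyf (h2.trans h1.symm)
  -- y has a neighbour other than s
  have hyq : ∃ q, T.Adj y q ∧ q ≠ s := by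
    by_contra hq
    push_neg at hq
    apply hynl
    have : T.neighborSet y = {s} := by
      ext x
      simp only [SimpleGraph.mem_neighborSet, Set.mem_singleton_iff]
      exact ⟨fun hx => hq x hx, fun hx => hx ▸ hsy.symm⟩
    rw [IsLeafVert, this]
    simp
  obtain ⟨q, hyq, hqs⟩ := hyq
  have hNf : ∀ x, T.Adj f x → x = s := fun x hx => leaf_nbr_eq hleaf hsf.symm hx
  have hfy : ¬ T.Adj f y := fun h => hsy.ne' (hNf y h)
  have hsq : ¬ T.Adj s q := fun h => no_triangle hT hsy hyq h.symm
  have hfq : ¬ T.Adj f q := fun h => hqs (hNf q h)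
  have hcom : ∀ c, T.Adj f c → T.Adj c q → False := by
    intro c h1 h2
    have := hNf c h1
    subst this
    exact hsq h2
  have hfq' : f ≠ q := by
    intro h
    subst h
    exact hfy hyq.symm
  exact ⟨f, s, y, q, hsf.symm, hsy, hyq, hfy, hsq, hfq, hcom, Ne.symm hyf, Ne.symm hqs, hfq'⟩

end Structure

section Main
variable {T : SimpleGraph V} {S : Set (Option (V ⊕ V))}

lemma claimX (hT : T.IsTree) (hS : IsGPSet (Mycielskian T) S) {b b1 : V}
    (hbA : oL b ∈ S) (hbB : oR b ∈ S) (hb1A : oL b1 ∈ S) (hb1B : oR b1 ∈ S)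
    (hne : b ≠ b1) {w : V} (hw : T.Adj b w) : oR w ∉ S := by
  intro hwB
  have hnadj : ¬ T.Adj b b1 := fun h => fact_P3 hS hbA hbB h hb1A
  by_cases hcom : ∃ m, T.Adj b m ∧ T.Adj m b1
  · obtain ⟨m, hm1, hm2⟩ := hcom
    by_cases hwm : w = m
    · subst hwm
      exact (fact_Q2 hS hbA hb1A hne hnadj hm1 hm2).2 hwB
    · have hwb1 : w ≠ b1 := fun h => hnadj (h ▸ hw)
      have hnadj2 : ¬ T.Adj b1 w := by
        intro hh
        exact hwm (unique_midpoint hT hne hw hh.symm hm1 hm2)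
      have hnocom : ∀ c, T.Adj b1 c → T.Adj c w → False := by
        intro c h1 h2
        by_cases hcb : c = b
        · subst hcb; exact hnadj h1.symm
        · exact no_common_of_path3 hT hm2.symm hm1.symm hw hne.symm hwb1.symm
            (fun hh => hwm hh.symm) h1 h2
      exact (fact_Q4 hS hb1A hwB hwb1.symm hnadj2 hnocom hm2.symm hm1.symm hw).2.1 hbA
  · have hc : ∀ c, T.Adj b c → T.Adj c b1 → False := fun c h1 h2 => hcom ⟨c, h1, h2⟩
    exact (fact_P4 hS hbA hb1B hne hnadj hc hw).1 hwB

lemma Dsingle [Fintype V] (hT : T.IsTree) (hn : 3 ≤ Fintype.card V)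
    (H : ∀ v, IsNTVert T v → ∃! u, T.Adj v u ∧ IsLeafVert T u)
    (hS : IsGPSet (Mycielskian T) S) {b : V}
    (hbA : oL b ∈ S) (hbB : oR b ∈ S)
    (hF : ∀ v : V, oL v ∈ S ∨ oR v ∈ S) : False := by
  classical
  have n1 : ∀ w, T.Adj b w → oR w ∈ S := by
    intro w hw
    rcases hF w with h | h
    · exact absurd h (fun hh => fact_P3 hS hbA hbB hw hh)
    · exact h
  have n2 : ∀ w1 w2, T.Adj b w1 → T.Adj b w2 → w1 = w2 := by
    intro w1 w2 h1 h2
    by_contra hne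
    exact fact_P2 hS (n1 w1 h1) (n1 w2 h2) hne h1.symm h2 hbA
  obtain ⟨w, hw⟩ := exists_nbr hT.isConnected (by omega) b
  have hNb : ∀ x, T.Adj b x → x = w := fun x hx => n2 x w hx hw
  have hwB : oR w ∈ S := n1 w hw
  have hbleaf : IsLeafVert T b := by
    rw [IsLeafVert]
    have : T.neighborSet b = {w} := by
      ext x
      simp only [SimpleGraph.mem_neighborSet, Set.mem_singleton_iff]
      exact ⟨fun hx => hNb x hx, fun hx => hx ▸ hw⟩
    rw [this]; simp
  have n4 : ∀ v, oR v ∈ S → v = b ∨ v = w ∨ T.Adj w v := by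
    intro v hv
    by_contra hcon
    push_neg at hcon
    obtain ⟨hvb, hvw, hvadj⟩ := hcon
    have hnadj : ¬ T.Adj b v := fun h => hvw (hNb v h)
    have hnocom : ∀ c, T.Adj b c → T.Adj c v → False := by
      intro c h1 h2
      have := hNb c h1
      subst this
      exact hvadj h2
    exact (fact_P4 hS hbA hv (fun h => hvb h.symm) hnadj hnocom hw).1 hwB
  have n5 : ∀ z, T.Adj w z → z ≠ b → ∀ x, T.Adj z x → x = w := by
    intro z h1 hzb x h2
    by_contra hxw
    have hxb : x ≠ b := by
      intro hh
      subst hh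
      have := hNb z h2.symm
      exact h1.ne' this
    have hnadjxw : ¬ T.Adj x w := fun hh => no_triangle hT h1 h2 hh
    have hnadjxb : ¬ T.Adj x b := fun hh => hxw (hNb x hh.symm)
    have hnocom_xb : ∀ c, T.Adj x c → T.Adj c b → False := by
      intro c hc1 hc2
      have := hNb c hc2.symm
      subst this
      exact hnadjxw hc1
    rcases hF x with hxA | hxB
    · have := fact_Q4 hS hxA hbB hxb hnadjxb hnocom_xb h2.symm h1.symm hw.symm
      rcases hF z with hzA | hzB
      · exact this.1 hzA
      · exact this.2.2 hzB
    · rcases n4 x hxB with h | h | h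
      · exact hxb h
      · exact hxw h
      · exact hnadjxw h.symm
  have hcon : ∀ z, T.Adj w z → ∀ x, T.Adj z x → x = w := by
    intro z h1 x h2
    by_cases hzb : z = b
    · subst hzb; exact hNb x h2
    · exact n5 z h1 hzb x h2
  have n6 := confine hT.isConnected hcon
  obtain ⟨z, hzw, hzb⟩ : ∃ z : V, z ≠ w ∧ z ≠ b := by
    by_contra hcon2
    push_neg at hcon2
    have : (Finset.univ : Finset V) ⊆ {w, b} := by
      intro v _
      rcases em (v = w) with h | h
      · simp [h]
      · simp [hcon2 v h]
    have h1 := Finset.card_le_card this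
    have h2 : ({w, b} : Finset V).card ≤ 2 := by
      apply le_trans (Finset.card_insert_le _ _); simp
    rw [Finset.card_univ] at h1
    omega
  have hadjwz : T.Adj w z := by
    rcases n6 z with h | h
    · exact absurd h hzw
    · exact h
  have hzleaf : IsLeafVert T z := by
    rw [IsLeafVert]
    have : T.neighborSet z = {w} := by
      ext x
      simp only [SimpleGraph.mem_neighborSet, Set.mem_singleton_iff]
      exact ⟨fun hx => n5 z hadjwz hzb x hx, fun hx => hx ▸ hadjwz.symm⟩
    rw [this]; simp
  obtain ⟨u, _, hu⟩ := H w ⟨b, hw.symm, hbleaf⟩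
  have h1 := hu b ⟨hw.symm, hbleaf⟩
  have h2 := hu z ⟨hadjwz, hzleaf⟩
  exact hzb (h2.trans h1.symm)

end Main

section Main2
variable {T : SimpleGraph V} {S : Set (Option (V ⊕ V))}

lemma exists_good [Fintype V] (hT : T.IsTree) (hn : 3 ≤ Fintype.card V)
    (hS : IsGPSet (Mycielskian T) S) {b : V}
    (hbA : oL b ∈ S) (hbB : oR b ∈ S) (hnl : ¬ IsLeafVert T b) :
    ∃ x, T.Adj b x ∧ ∀ b2, oL b2 ∈ S → oR b2 ∈ S → b2 ≠ b → ¬ T.Adj x b2 := by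
  classical
  have hMsub : ∀ m m' c c', T.Adj b m → T.Adj m c → oL c ∈ S → oR c ∈ S → c ≠ b →
      T.Adj b m' → T.Adj m' c' → oL c' ∈ S → oR c' ∈ S → c' ≠ b → m = m' := by
    intro m m' c c' hm hmc hcA hcB hcb hm' hm'c' hc'A hc'B hc'b
    by_contra hmm
    by_cases hcc : c = c'
    · subst hcc
      exact hmm (unique_midpoint hT (Ne.symm hcb) hm hmc hm' hm'c')
    · have hnadjbc : ¬ T.Adj b c := fun h => fact_P3 hS hbA hbB h hcA
      have hnadjbc' : ¬ T.Adj b c' := fun h => fact_P3 hS hbA hbB h hc'A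
      have ham2 : c ≠ m' := fun h => hnadjbc (h ▸ hm')
      have hm1z : m ≠ c' := fun h => hnadjbc' (h ▸ hm)
      obtain ⟨hnadjcc', hcom, h3w⟩ := far4_of_path4 hT hmc.symm hm.symm hm' hm'c'
        hcb ham2 hcc (hmm) hm1z (Ne.symm hc'b)
      exact fact_Q5 hS hcA hc'A hcc hnadjcc' hcom h3w hmc.symm hm.symm hm' hm'c' hbA
  -- b has two distinct neighbours
  have h2n : ∃ x1 x2, T.Adj b x1 ∧ T.Adj b x2 ∧ x1 ≠ x2 := by
    obtain ⟨x, hx⟩ := exists_nbr hT.isConnected (by omega) b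
    have h1 : 1 ≤ (T.neighborSet b).ncard := by
      rw [Nat.one_le_iff_ne_zero, Ne, Set.ncard_eq_zero (Set.toFinite _)]
      exact fun hh => by simpa [hh] using (show x ∈ T.neighborSet b from hx)
    have h2 : (T.neighborSet b).ncard ≠ 1 := fun hh => hnl hh
    have : 1 < (T.neighborSet b).ncard := by omega
    obtain ⟨x1, hx1, x2, hx2, hne⟩ := (Set.one_lt_ncard (Set.toFinite _)).1 this
    exact ⟨x1, x2, hx1, hx2, hne⟩
  obtain ⟨x1, x2, hx1, hx2, hne⟩ := h2n
  by_cases hp1 : ∃ b2, oL b2 ∈ S ∧ oR b2 ∈ S ∧ b2 ≠ b ∧ T.Adj x1 b2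
  · by_cases hp2 : ∃ b2, oL b2 ∈ S ∧ oR b2 ∈ S ∧ b2 ≠ b ∧ T.Adj x2 b2
    · obtain ⟨c1, hc1A, hc1B, hc1b, hc1adj⟩ := hp1
      obtain ⟨c2, hc2A, hc2B, hc2b, hc2adj⟩ := hp2
      exact absurd (hMsub x1 x2 c1 c2 hx1 hc1adj hc1A hc1B hc1b hx2 hc2adj hc2A hc2B hc2b) hne
    · push_neg at hp2
      exact ⟨x2, hx2, fun b2 hA hB hneb hadj => (hp2 b2 hA hB hneb) hadj⟩
  · push_neg at hp1
    exact ⟨x1, hx1, fun b2 hA hB hneb hadj => (hp1 b2 hA hB hneb) hadj⟩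

lemma S_ncard_split [Fintype V] (S : Set (Option (V ⊕ V))) :
    S.ncard = {a : V | oL a ∈ S}.ncard + {b : V | oR b ∈ S}.ncard + (S ∩ {none}).ncard := by
  classical
  have hinjL : Function.Injective (oL (V := V)) := fun a b h => by simpa using h
  have hinjR : Function.Injective (oR (V := V)) := fun a b h => by simpa using h
  have hU : S = (oL '' {a | oL a ∈ S} ∪ oR '' {b | oR b ∈ S}) ∪ (S ∩ {none}) := by
    ext x
    rcases x with _ | (a | a) <;> simp [oL, oR]
  have hd2 : Disjoint (oL '' {a : V | oL a ∈ S}) (oR '' {b : V | oR b ∈ S}) := by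
    rw [Set.disjoint_left]
    rintro x ⟨a, _, rfl⟩ ⟨b, _, hb⟩
    simp [oL, oR] at hb
  have hd1 : Disjoint (oL '' {a : V | oL a ∈ S} ∪ oR '' {b : V | oR b ∈ S}) (S ∩ {none}) := by
    rw [Set.disjoint_left]
    rintro x (⟨a, _, rfl⟩ | ⟨b, _, rfl⟩) ⟨_, hx2⟩ <;> simp [oL, oR] at hx2
  conv_lhs => rw [hU]
  rw [Set.ncard_union_eq hd1 (Set.toFinite _) (Set.toFinite _),
    Set.ncard_union_eq hd2 (Set.toFinite _) (Set.toFinite _),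
    Set.ncard_image_of_injective _ hinjL, Set.ncard_image_of_injective _ hinjR]

lemma gp_upper [Fintype V] (hT : T.IsTree) (hn : 3 ≤ Fintype.card V)
    (H : ∀ v, IsNTVert T v → ∃! u, T.Adj v u ∧ IsLeafVert T u)
    (hS : IsGPSet (Mycielskian T) S) : S.ncard ≤ Fintype.card V := by
  classical
  set A : Set V := {a | oL a ∈ S} with hAdef
  set B : Set V := {b | oR b ∈ S} with hBdef
  have hsplit := S_ncard_split S
  rw [← hAdef, ← hBdef] at hsplit
  -- at least two vertices are not in A
  have hAsmall : ∃ u1 u2 : V, u1 ≠ u2 ∧ oL u1 ∉ S ∧ oL u2 ∉ S := by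
    obtain ⟨f, s, y, q, hfs, hsy, hyq, hfy, hsq, hfq, hcom, hfyne, hsqne, hfqne⟩ :=
      exists_geodesic_P4 hT hn H
    by_cases hfS : oL f ∈ S
    · by_cases hqS : oL q ∈ S
      · have := fact_Q3 hS hfS hqS hfqne hfq hcom hfs hsy hyq
        exact ⟨s, y, hsy.ne, this.1, this.2.1⟩
      · by_cases hyS : oL y ∈ S
        · have := fact_Q2 hS hfS hyS hfyne hfy hfs hsy
          exact ⟨s, q, hsqne, this.1, hqS⟩
        · exact ⟨y, q, hyq.ne, hyS, hqS⟩
    · by_cases hsS : oL s ∈ S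
      · by_cases hqS' : oL q ∈ S
        · have := fact_Q2 hS hsS hqS' hsqne hsq hsy hyq
          exact ⟨f, y, hfyne, hfS, this.1⟩
        · exact ⟨f, q, hfqne, hfS, hqS'⟩
      · exact ⟨f, s, hfs.ne, hfS, hsS⟩
  have hA2 : A.ncard + 2 ≤ Fintype.card V := by
    obtain ⟨u1, u2, hne, h1, h2⟩ := hAsmall
    have hsub : A ⊆ ({u1, u2} : Set V)ᶜ := by
      intro a ha
      simp only [Set.mem_compl_iff, Set.mem_insert_iff, Set.mem_singleton_iff]
      push_neg
      exact ⟨fun hh => h1 (hh ▸ ha), fun hh => h2 (hh ▸ ha)⟩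
    have hle : A.ncard ≤ (({u1, u2} : Set V)ᶜ).ncard := Set.ncard_le_ncard hsub (Set.toFinite _)
    have hcompl := Set.ncard_add_ncard_compl ({u1, u2} : Set V) (Set.toFinite _) (Set.toFinite _)
    rw [Set.ncard_pair hne, Nat.card_eq_fintype_card] at hcompl
    omega
  by_cases hroot : (none : Option (V ⊕ V)) ∈ S
  · have hB1 : B.ncard ≤ 1 := by
      rw [Set.ncard_le_one_iff (Set.toFinite _)]
      intro b1 b2 hb1 hb2
      by_contra hne
      exact fact_P1 hS hb1 hb2 hne hroot
    have hN1 : (S ∩ {none}).ncard ≤ 1 := by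
      have := Set.ncard_le_ncard (Set.inter_subset_right (s := S) (t := {none})) (Set.toFinite _)
      simpa using this
    omega
  · have hN0 : (S ∩ {none}).ncard = 0 := by
      have he : S ∩ {none} = ∅ := by
        ext x
        simp only [Set.mem_inter_iff, Set.mem_singleton_iff, Set.mem_empty_iff_false, iff_false,
          not_and]
        rintro hx rfl
        exact hroot hx
      simp [he]
    have hDF : (A ∩ B).ncard ≤ ((A ∪ B)ᶜ).ncard := by
      by_cases hD2 : ∃ d1 ∈ A ∩ B, ∃ d2 ∈ A ∩ B, d1 ≠ d2
      · obtain ⟨d1, hd1, d2, hd2, hdne⟩ := hD2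
        have hpartner : ∀ b ∈ A ∩ B, ∃ b1, b1 ≠ b ∧ oL b1 ∈ S ∧ oR b1 ∈ S := by
          intro b hb
          by_cases hbd : b = d1
          · exact ⟨d2, fun hh => hdne (hbd ▸ hh.symm), hd2.1, hd2.2⟩
          · exact ⟨d1, fun hh => hbd (hh.symm ▸ rfl), hd1.1, hd1.2⟩
        have hgood : ∀ b ∈ A ∩ B, ∃ x, T.Adj b x ∧
            (¬ IsLeafVert T b → ∀ b2 ∈ A ∩ B, b2 ≠ b → ¬ T.Adj x b2) := by
          intro b hb
          by_cases hbl : IsLeafVert T b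
          · obtain ⟨x, hx⟩ := exists_nbr hT.isConnected (by omega) b
            exact ⟨x, hx, fun hh => absurd hbl hh⟩
          · obtain ⟨x, hx1, hx2⟩ := exists_good hT hn hS hb.1 hb.2 hbl
            exact ⟨x, hx1, fun _ b2 hb2 hne2 => hx2 b2 hb2.1 hb2.2 hne2⟩
        choose! ψ hψ1 hψ2 using hgood
        apply Set.ncard_le_ncard_of_injOn ψ ?maps ?inj (Set.toFinite _)
        case maps =>
          intro b hb
          simp only [Set.mem_compl_iff, Set.mem_union]
          push_neg
          obtain ⟨b1, hb1ne, hb1A, hb1B⟩ := hpartner b hb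
          exact ⟨fun hh => fact_P3 hS hb.1 hb.2 (hψ1 b hb) hh,
            claimX hT hS hb.1 hb.2 hb1A hb1B (Ne.symm hb1ne) (hψ1 b hb)⟩
        case inj =>
          intro b1 hb1 b2 hb2 heq
          by_contra hne12
          have hadj1 : T.Adj b1 (ψ b1) := hψ1 b1 hb1
          have hadj2 : T.Adj b2 (ψ b2) := hψ1 b2 hb2
          have hadj2' : T.Adj (ψ b1) b2 := by rw [heq]; exact hadj2.symm
          have hadj1' : T.Adj (ψ b2) b1 := by rw [← heq]; exact hadj1.symm
          by_cases hl1 : IsLeafVert T b1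
          · by_cases hl2 : IsLeafVert T b2
            · obtain ⟨u, _, hu⟩ := H (ψ b1) ⟨b1, hadj1.symm, hl1⟩
              exact hne12 ((hu b1 ⟨hadj1.symm, hl1⟩).trans
                (hu b2 ⟨hadj2', hl2⟩).symm)
            · exact hψ2 b2 hb2 hl2 b1 hb1 hne12 hadj1'
          · exact hψ2 b1 hb1 hl1 b2 hb2 (Ne.symm hne12) hadj2'
      · push_neg at hD2
        have hD1 : (A ∩ B).ncard ≤ 1 := by
          rw [Set.ncard_le_one_iff (Set.toFinite _)]
          intro b1 b2 hb1 hb2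
          exact hD2 b1 hb1 b2 hb2
        rcases Set.eq_empty_or_nonempty (A ∩ B) with hD0 | ⟨b, hb⟩
        · simp [hD0]
        · have hFne : ((A ∪ B)ᶜ).Nonempty := by
            by_contra hFe
            rw [Set.not_nonempty_iff_eq_empty] at hFe
            have hall : ∀ v : V, oL v ∈ S ∨ oR v ∈ S := by
              intro v
              have hv : v ∈ A ∪ B := by
                by_contra hh
                exact (Set.eq_empty_iff_forall_notMem.1 hFe v) hh
              exact hv
            exact Dsingle hT hn H hS hb.1 hb.2 hall
          have := (Set.ncard_pos (Set.toFinite _)).2 hFne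
          omega
    have hsum := Set.ncard_union_add_ncard_inter A B (Set.toFinite _) (Set.toFinite _)
    have hcomp := Set.ncard_add_ncard_compl (A ∪ B) (Set.toFinite _) (Set.toFinite _)
    rw [Nat.card_eq_fintype_card] at hcomp
    omega

end Main2

section Final
variable {T : SimpleGraph V}

lemma twins_gp : IsGPSet (Mycielskian T) (Set.range (oR (V := V))) := by
  intro u hu v hv p hp w hw hsup
  obtain ⟨b1, rfl⟩ := hu
  obtain ⟨b2, rfl⟩ := hv
  obtain ⟨w0, rfl⟩ := hw
  by_cases hbe : b1 = b2
  · subst hbe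
    rw [SimpleGraph.dist_self] at hp
    cases p with
    | nil =>
      simp at hsup
      exact Or.inl (by rw [hsup])
    | cons h q => simp at hp
  · rw [mdist_inr_inr hbe] at hp
    cases p with
    | nil => simp at hp
    | @cons _ x _ h q =>
      cases q with
      | nil => simp at hp
      | @cons _ x2 _ h2 q2 =>
        cases q2 with
        | nil =>
          simp only [SimpleGraph.Walk.support_cons, SimpleGraph.Walk.support_nil,
            List.mem_cons, List.mem_singleton, List.not_mem_nil, or_false] at hsup
          rcases hsup with h1 | h1 | h1
          · exact Or.inl h1
          · exact absurd (show (Mycielskian T).Adj (oR b1) (oR w0) by rw [h1]; exact h)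
              madj_inr_inr
          · exact Or.inr h1
        | cons h3 q3 => simp at hp

end Final

/-- If `T` is a tree of order `n ≥ 3` in which every NT vertex is
adjacent to exactly one leaf, then `gp(μ(T)) = n`. -/
theorem gpNumber_mycielskian_tree_eq_order [Fintype V] (T : SimpleGraph V)
    (hT : T.IsTree) (hn : 3 ≤ Fintype.card V)
    (h : ∀ v, IsNTVert T v → ∃! u, T.Adj v u ∧ IsLeafVert T u) :
    gpNumber (Mycielskian T) = Fintype.card V := by
  classical
  have hub : ∀ k ∈ {k | ∃ S, IsGPSet (Mycielskian T) S ∧ S.ncard = k}, k ≤ Fintype.card V := by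
    rintro k ⟨S, hS, rfl⟩
    exact gp_upper hT hn h hS
  have hinjR : Function.Injective (oR (V := V)) := fun a b hh => by simpa using hh
  have hmem : Fintype.card V ∈ {k | ∃ S, IsGPSet (Mycielskian T) S ∧ S.ncard = k} := by
    refine ⟨Set.range (oR (V := V)), twins_gp, ?_⟩
    rw [← Set.image_univ, Set.ncard_image_of_injective _ hinjR, Set.ncard_univ,
      Nat.card_eq_fintype_card]
  apply le_antisymm
  · exact csSup_le ⟨_, hmem⟩ hub
  · exact le_csSup ⟨Fintype.card V, hub⟩ hmem
end
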